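/- Let (R, m) be a square zero extension of ℤ/2ℤ. Then the following are equivalent: (1) R has property (*), i.e. there exist a nontrivial Noetherian ring S and a flat ring homomorphism R → S; (2) R is Noetherian; (3) R is a finite ring. Moreover, if these hold, then the cardinality of R equals 2^{n+1}, where n is the minimal number of generators of m as an R-module. -/

import Mathlib

/-!
Since `m² = 0`, every prime ideal contains `m`, so `m` is the only prime of `R`. Hence a flat map
from `R` to a nontrivial ring is faithfully flat, and Noetherianity descends along it. If `R` is
Noetherian, `m` is a finitely generated module over the finite field `R/m`, so `R` is finite.
Finally `m ≅ m/m²` is the cotangent space of the local ring `R`, whose dimension over `R/m` is the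
minimal number of generators of `m` by Nakayama; thus `|R| = |R/m| · |m| = 2 · 2ⁿ`.
-/

open IsLocalRing

theorem Ideal.isMaximal_of_natCard_quotient_eq_two {R : Type*} [CommRing R] {m : Ideal R}
    (hm : Nat.card (R ⧸ m) = 2) : m.IsMaximal := by
  have : Finite (R ⧸ m) := Nat.finite_of_card_ne_zero (by omega)
  have : Nontrivial (R ⧸ m) := Finite.one_lt_card_iff_nontrivial.mp (by omega)
  obtain ⟨b, -, hb⟩ := (Nat.card_eq_two_iff' (0 : R ⧸ m)).mp hm
  refine Ideal.Quotient.maximal_of_isField m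
    ⟨exists_pair_ne _, mul_comm, fun {a} ha => ⟨1, ?_⟩⟩
  rw [hb a ha, ← hb 1 one_ne_zero, mul_one]

theorem Ideal.IsMaximal.eq_of_isPrime_of_sq_eq_bot {R : Type*} [CommRing R] {m P : Ideal R}
    (hm : m.IsMaximal) (hm2 : m ^ 2 = ⊥) [P.IsPrime] : P = m :=
  (hm.eq_of_le Ideal.IsPrime.ne_top' (Ideal.IsPrime.le_of_pow_le (hm2 ▸ bot_le))).symm

theorem Module.FaithfullyFlat.of_subsingleton_primeSpectrum {A B : Type*} [CommRing A]
    [CommRing B] [Algebra A B] [Subsingleton (PrimeSpectrum A)] [Nontrivial B] [Module.Flat A B] :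
    Module.FaithfullyFlat A B :=
  .of_comap_surjective fun _ => ⟨Classical.arbitrary _, Subsingleton.elim _ _⟩

theorem IsNoetherianRing.of_faithfullyFlat {A B : Type*} [CommRing A] [CommRing B] [Algebra A B]
    [Module.FaithfullyFlat A B] [IsNoetherianRing B] : IsNoetherianRing A := by
  let e : Ideal A ↪o Ideal B := OrderEmbedding.ofMapLEIff (Ideal.map (algebraMap A B))
    fun I J => ⟨fun h => by
      simpa only [Ideal.comap_map_eq_self_of_faithfullyFlat]
        using Ideal.comap_mono (f := algebraMap A B) h,
      Ideal.map_mono⟩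
  rw [isNoetherianRing_iff, isNoetherian_iff']
  exact e.wellFoundedGT

theorem Submodule.spanFinrank_eq_sInf {R M : Type*} [Semiring R] [AddCommMonoid M] [Module R M]
    (p : Submodule R M) :
    p.spanFinrank = sInf {k | ∃ s : Finset M, s.card = k ∧ span R (s : Set M) = p} := by
  rw [spanFinrank_eq_iInf, iInf]
  congr 1
  ext k
  simp only [Set.mem_range, Subtype.exists, Set.mem_ofPred_eq]
  exact ⟨fun ⟨s, hs, hk⟩ => ⟨s, hk, hs⟩, fun ⟨s, hk, hs⟩ => ⟨s, hs, hk⟩⟩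

theorem finite_of_sq_eq_bot_of_fg {R : Type*} [CommRing R] {m : Ideal R} [Finite (R ⧸ m)]
    (hm2 : m ^ 2 = ⊥) (hfg : m.FG) : Finite R := by
  have htors : Module.IsTorsionBySet R m m := fun x a => by
    ext
    simpa [hm2] using (sq m ▸ Ideal.mul_mem_mul a.2 x.2 : (a : R) * x ∈ m ^ 2)
  let := htors.module
  have : Module.Finite R m := Module.Finite.iff_fg.mpr hfg
  have : Module.Finite (R ⧸ m) m := Module.Finite.of_restrictScalars_finite R _ _
  have : Finite m := Module.finite_of_finite (R ⧸ m)
  refine Nat.finite_of_card_ne_zero ?_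
  rw [Submodule.card_eq_card_quotient_mul_card m]
  exact mul_ne_zero Nat.card_pos.ne' Nat.card_pos.ne'

theorem IsLocalRing.natCard_eq_pow_spanFinrank_add_one {R : Type*} [CommRing R] [IsLocalRing R]
    [Finite R] (hm2 : maximalIdeal R ^ 2 = ⊥) :
    Nat.card R = Nat.card (ResidueField R) ^ ((maximalIdeal R).spanFinrank + 1) := by
  have hcot : Nat.card (maximalIdeal R) = Nat.card (CotangentSpace R) := by
    refine Nat.card_congr (Equiv.ofBijective _ ⟨?_, (maximalIdeal R).toCotangent_surjective⟩)
    rw [← LinearMap.ker_eq_bot, eq_bot_iff]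
    intro x hx
    simpa [hm2] using ((maximalIdeal R).toCotangent_eq_zero x).mp hx
  have : Finite (CotangentSpace R) := Finite.of_surjective _ (maximalIdeal R).toCotangent_surjective
  rw [Submodule.card_eq_card_quotient_mul_card (maximalIdeal R), hcot,
    Module.natCard_eq_pow_finrank (K := ResidueField R),
    spanFinrank_maximalIdeal_eq_finrank_cotangentSpace, pow_succ]
  rfl

theorem stmt18_general {R : Type u} [CommRing R] (m : Ideal R)
    (hm2 : m ^ 2 = ⊥) (hcard : Nat.card (R ⧸ m) = 2) :
    List.TFAE
      [∃ (S : Type u) (_ : CommRing S), Nontrivial S ∧ IsNoetherianRing S ∧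
          ∃ φ : R →+* S, φ.Flat,
        IsNoetherianRing R,
        Finite R] ∧
      (Finite R →
        Nat.card R =
          2 ^ (sInf {k : ℕ | ∃ s : Finset R, s.card = k ∧ Ideal.span (s : Set R) = m} + 1)) := by
  have hmax : m.IsMaximal := Ideal.isMaximal_of_natCard_quotient_eq_two hcard
  have : Finite (R ⧸ m) := Nat.finite_of_card_ne_zero (by omega)
  have : Subsingleton (PrimeSpectrum R) := ⟨fun P Q => PrimeSpectrum.ext <|
    (hmax.eq_of_isPrime_of_sq_eq_bot hm2).trans (hmax.eq_of_isPrime_of_sq_eq_bot hm2).symm⟩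
  have : IsLocalRing R := .of_unique_max_ideal
    ⟨m, hmax, fun I hI => have := hI.isPrime; hmax.eq_of_isPrime_of_sq_eq_bot hm2⟩
  refine ⟨?_, fun _ => ?_⟩
  · tfae_have 1 → 2 := by
      rintro ⟨S, _, _, _, φ, hφ⟩
      let := φ.toAlgebra
      have : Module.Flat R S := hφ
      have : Module.FaithfullyFlat R S := .of_subsingleton_primeSpectrum
      exact .of_faithfullyFlat (B := S)
    tfae_have 2 → 3 := fun _ => finite_of_sq_eq_bot_of_fg hm2 m.fg_of_isNoetherianRing
    tfae_have 3 → 2 := fun _ => inferInstance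
    tfae_have 2 → 1 := fun h => ⟨R, _, inferInstance, h, RingHom.id R, RingHom.Flat.id R⟩
    tfae_finish
  · obtain rfl := IsLocalRing.eq_maximalIdeal hmax
    rw [← Submodule.spanFinrank_eq_sInf, natCard_eq_pow_spanFinrank_add_one hm2]
    exact congrArg (· ^ _) hcard

/-- Let `(R, m)` be a square zero extension of `ℤ/2ℤ`, i.e. `m² = 0` and `R/m` has exactly
two elements. Then TFAE: (1) `R` has property (*), i.e. there is a flat ring map from `R` to
a nontrivial Noetherian ring; (2) `R` is Noetherian; (3) `R` is finite. Moreover, in that case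
`|R| = 2^(n+1)` where `n` is the minimal number of generators of `m`. -/
theorem stmt18 {R : Type u} [CommRing R] [Nontrivial R] (m : Ideal R)
    (hm2 : m ^ 2 = ⊥) (hcard : Nat.card (R ⧸ m) = 2) :
    List.TFAE
      [∃ (S : Type u) (_ : CommRing S), Nontrivial S ∧ IsNoetherianRing S ∧
          ∃ φ : R →+* S, φ.Flat,
        IsNoetherianRing R,
        Finite R] ∧
      (Finite R →
        Nat.card R =
          2 ^ (sInf {k : ℕ | ∃ s : Finset R, s.card = k ∧ Ideal.span (s : Set R) = m} + 1)) :=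
  stmt18_general m hm2 hcard
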